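/- arXiv:2208.13167 — 6 statements merged into one kernel-verified Lean document; each statement's English description precedes it below -/
import Mathlib

section
/- Let b,m>0 and u > 4bm, set v_±(u) := (1 ± √(1 − 4bm/u))/(2b) and c_vd(u) := √(bu/2)·(v_+(u) − 2v_−(u)). Then the function v_vd(ζ) := (v_+(u)/2)(1 − tanh(v_+(u)√(bu) ζ/(2√2))) solves v'' + c_vd(u) v' − m v + u v²(1 − b v) = 0 on ℝ, and satisfies v_vd(ζ) → v_+(u) as ζ → −∞ and v_vd(ζ) → 0 as ζ → +∞. In particular, v_vd' = √(bu/2)·v_vd·(v_vd − v_+(u)) and v_vd is a vegetation-to-desert traveling front of the layer problem with wave speed c_vd(u). -/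
/-!
The profile `v = (A/2)(1 - tanh (S A ζ / 2))` solves the Bernoulli equation `v' = S v (v - A)`.
Differentiating once more, every solution of `v' = S v (v - v₊)` satisfies
`v'' + S (v₊ - 2 v₋) v' = 2 S² v (v - v₊) (v - v₋)`, and for `2 S² = b u` the right-hand side is
the Klausmeier nonlinearity `m v - u v² (1 - b v) = b u v (v - v₋) (v - v₊)`, whose nonzero roots
are `v_±`.
-/

open Real Filter Topology

namespace Real

theorem hasDerivAt_tanh (x : ℝ) : HasDerivAt tanh (1 - tanh x ^ 2) x := by
  have hcosh : cosh x ≠ 0 := (cosh_pos x).ne'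
  have h := (hasDerivAt_sinh x).div (hasDerivAt_cosh x) hcosh
  rw [show sinh / cosh = tanh from funext fun y => (tanh_eq_sinh_div_cosh y).symm] at h
  refine h.congr_deriv ?_
  rw [tanh_eq_sinh_div_cosh]
  field_simp

theorem tanh_eq_one_sub_two_div (x : ℝ) : tanh x = 1 - 2 / (exp (2 * x) + 1) := by
  have hexp : exp (2 * x) = exp x * exp x := by rw [← exp_add]; ring_nf
  rw [tanh_eq, exp_neg, hexp]
  field_simp
  ring

theorem tendsto_tanh_atTop : Tendsto tanh atTop (𝓝 1) := by
  have h : Tendsto (fun x : ℝ => exp (2 * x) + 1) atTop atTop :=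
    tendsto_atTop_add_const_right _ _
      (tendsto_exp_atTop.comp (tendsto_id.const_mul_atTop two_pos))
  rw [funext tanh_eq_one_sub_two_div]
  simpa using (tendsto_const_nhds (x := (1 : ℝ))).sub
    ((tendsto_const_nhds (x := (2 : ℝ))).div_atTop h)

theorem tendsto_tanh_atBot : Tendsto tanh atBot (𝓝 (-1)) := by
  simpa [Function.comp_def] using (tendsto_tanh_atTop.comp tendsto_neg_atBot_atTop).neg

end Real

noncomputable def tanhFront (A S ζ : ℝ) : ℝ := A / 2 * (1 - tanh (S * A * ζ / 2))

theorem hasDerivAt_tanhFront (A S ζ : ℝ) :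
    HasDerivAt (tanhFront A S) (S * tanhFront A S ζ * (tanhFront A S ζ - A)) ζ := by
  have harg : HasDerivAt (fun ζ => S * A * ζ / 2) (S * A / 2) ζ := by
    simpa using ((hasDerivAt_id ζ).const_mul (S * A)).div_const 2
  have h := (((hasDerivAt_tanh _).comp ζ harg).const_sub 1).const_mul (A / 2)
  refine h.congr_deriv ?_
  simp only [tanhFront]
  ring

theorem tendsto_tanhFront_atBot {A S : ℝ} (h : 0 < S * A) :
    Tendsto (tanhFront A S) atBot (𝓝 A) := by
  have harg : Tendsto (fun ζ => S * A * ζ / 2) atBot atBot :=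
    (tendsto_id.const_mul_atBot h).atBot_div_const two_pos
  have h := ((tendsto_tanh_atBot.comp harg).const_sub 1).const_mul (A / 2)
  rwa [show A / 2 * (1 - -1) = A by ring] at h

theorem tendsto_tanhFront_atTop {A S : ℝ} (h : 0 < S * A) :
    Tendsto (tanhFront A S) atTop (𝓝 0) := by
  have harg : Tendsto (fun ζ => S * A * ζ / 2) atTop atTop :=
    (tendsto_id.const_mul_atTop h).atTop_div_const two_pos
  have h := ((tendsto_tanh_atTop.comp harg).const_sub 1).const_mul (A / 2)
  rwa [sub_self, mul_zero] at h

theorem deriv_deriv_add_of_hasDerivAt_logistic {f : ℝ → ℝ} {S p : ℝ}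
    (hf : ∀ ζ, HasDerivAt f (S * f ζ * (f ζ - p)) ζ) (q ζ : ℝ) :
    deriv (deriv f) ζ + S * (p - 2 * q) * deriv f ζ
      = 2 * S ^ 2 * f ζ * (f ζ - p) * (f ζ - q) := by
  have hf' : HasDerivAt (deriv f)
      (S * (S * f ζ * (f ζ - p)) * (f ζ - p) + S * f ζ * (S * f ζ * (f ζ - p))) ζ := by
    rw [funext fun ζ => (hf ζ).deriv]
    exact ((hf ζ).const_mul S).mul ((hf ζ).sub_const p)
  rw [hf'.deriv, (hf ζ).deriv]
  ring

theorem klausmeier_nonlinearity_factorization {b m u r : ℝ} (hb : b ≠ 0) (hu : u ≠ 0)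
    (hr : r ^ 2 = 1 - 4 * b * m / u) (v : ℝ) :
    m * v - u * v ^ 2 * (1 - b * v)
      = b * u * v * (v - (1 - r) / (2 * b)) * (v - (1 + r) / (2 * b)) := by
  have hr' : u * r ^ 2 = u - 4 * b * m := by rw [hr]; field_simp
  field_simp
  linear_combination v * hr'

/-- The vegetation-to-desert traveling front of the layer problem:
`v_vd(ζ) = (v₊(u)/2)(1 − tanh(v₊(u)√(bu) ζ/(2√2)))` solves
`v'' + c_vd(u) v' − m v + u v²(1 − b v) = 0` with
`c_vd(u) = √(bu/2)(v₊(u) − 2v₋(u))`, connecting `v₊(u)` at `−∞` to `0` at `+∞`,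
and satisfies `v' = √(bu/2)·v·(v − v₊(u))`. -/
theorem traveling_front_vd
    (b m u : ℝ) (hb : 0 < b) (hm : 0 < m) (hu : 4*b*m < u) :
    let vm := (1 - Real.sqrt (1 - 4*b*m/u)) / (2*b)
    let vp := (1 + Real.sqrt (1 - 4*b*m/u)) / (2*b)
    let cvd := Real.sqrt (b*u/2) * (vp - 2*vm)
    let vvd : ℝ → ℝ := fun ζ =>
      (vp/2) * (1 - Real.tanh (vp * Real.sqrt (b*u) * ζ / (2*Real.sqrt 2)))
    -- the ODE
    (∀ ζ : ℝ, deriv (deriv vvd) ζ + cvd * deriv vvd ζ - m * vvd ζ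
        + u * (vvd ζ)^2 * (1 - b * vvd ζ) = 0) ∧
    -- asymptotics
    Filter.Tendsto vvd Filter.atBot (nhds vp) ∧
    Filter.Tendsto vvd Filter.atTop (nhds 0) ∧
    -- the first-order relation
    (∀ ζ : ℝ, deriv vvd ζ = Real.sqrt (b*u/2) * vvd ζ * (vvd ζ - vp)) := by
  intro vm vp cvd vvd
  have hu0 : 0 < u := lt_trans (by positivity) hu
  have hr : √(1 - 4*b*m/u) ^ 2 = 1 - 4*b*m/u :=
    sq_sqrt (by rw [sub_nonneg, div_le_one hu0]; linarith)
  have hvp : 0 < vp := by positivity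
  set S := √(b*u/2) with hS
  have hS0 : 0 < S := by positivity
  have hvvd : vvd = tanhFront vp S := by
    have hsqrt : √(b*u) = S * √2 := by rw [hS, ← sqrt_mul (by positivity)]; ring_nf
    funext ζ
    simp only [vvd, tanhFront, hsqrt]
    field_simp
  have hfront := hasDerivAt_tanhFront vp S
  rw [hvvd]
  set v := tanhFront vp S
  refine ⟨fun ζ => ?_, tendsto_tanhFront_atBot (by positivity),
    tendsto_tanhFront_atTop (by positivity), fun ζ => (hfront ζ).deriv⟩
  have hS2 : S ^ 2 = b*u/2 := sq_sqrt (by positivity)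
  linear_combination deriv_deriv_add_of_hasDerivAt_logistic hfront vm ζ
    - klausmeier_nonlinearity_factorization hb.ne' hu0.ne' hr (v ζ)
    + 2 * v ζ * (v ζ - vp) * (v ζ - vm) * hS2
end

section
/- Let b,m>0 and set u_f := 9bm/2. The functions v_dv(s) := (1/(3b))(1 + tanh(√m s/2)) and v_vd(s) := (1/(3b))(1 − tanh(√m s/2)) each solve the stationary layer equation v'' = m v − u_f v²(1 − b v) on ℝ. Moreover v_dv(s) → 0 as s → −∞ and v_dv(s) → 2/(3b) as s → +∞, while v_vd(s) → 2/(3b) as s → −∞ and v_vd(s) → 0 as s → +∞; in particular, at u = u_f the layer problem possesses a heteroclinic loop between its saddle equilibria v = 0 and v = v_+(u_f) = 2/(3b). -/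
/-!
Since `tanh' = 1 - tanh²`, the profile `T(s) = tanh (k s)` satisfies `T'' = -2 k² T (1 - T²)`.
For `v = (1 + ε T) / (3b)` with `ε² = 1` and `k² = m / 4` this cubic is exactly the layer
nonlinearity at `u = 9bm/2`; the limits follow from `tanh → ±1` at `±∞`.
-/

open Real Filter Topology

namespace Real

theorem tanh_eq_one_sub_exp_div_one_add_exp (x : ℝ) :
    tanh x = (1 - exp (-(2 * x))) / (1 + exp (-(2 * x))) := by
  rw [tanh_eq_sinh_div_cosh, sinh_eq, cosh_eq, show -(2 * x) = -x + -x by ring, exp_add]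
  field_simp
  rw [exp_neg]
  field_simp

end Real

theorem hasDerivAt_tanh_mul (k x : ℝ) :
    HasDerivAt (fun s => tanh (k * s)) ((1 - tanh (k * x) ^ 2) * k) x := by
  have hlin : HasDerivAt (fun s => k * s) k x := by simpa using (hasDerivAt_id x).const_mul k
  exact (hasDerivAt_tanh (k * x)).comp x hlin

theorem deriv_deriv_const_add_mul_tanh_mul (a d k x : ℝ) :
    deriv (deriv fun s => a + d * tanh (k * s)) x =
      -2 * d * k ^ 2 * tanh (k * x) * (1 - tanh (k * x) ^ 2) := by
  have hfirst :
      deriv (fun s => a + d * tanh (k * s)) = fun s => d * ((1 - tanh (k * s) ^ 2) * k) :=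
    funext fun s => (((hasDerivAt_tanh_mul k s).const_mul d).const_add a).deriv
  have hsecond := (((hasDerivAt_tanh_mul k x).fun_pow 2).const_sub 1).mul_const k |>.const_mul d
  rw [hfirst, hsecond.deriv]
  ring

noncomputable def layerFront (b m ε s : ℝ) : ℝ := (1 + ε * tanh (√m * s / 2)) / (3 * b)

theorem layerFront_solves_layer_equation (b : ℝ) {m ε : ℝ} (hm : 0 ≤ m) (hε : ε ^ 2 = 1)
    (s : ℝ) :
    deriv (deriv (layerFront b m ε)) s = m * layerFront b m ε s
      - 9 * b * m / 2 * layerFront b m ε s ^ 2 * (1 - b * layerFront b m ε s) := by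
  have hform : layerFront b m ε = fun s => (3 * b)⁻¹ + ε / (3 * b) * tanh (√m / 2 * s) := by
    funext s
    rw [layerFront, show √m * s / 2 = √m / 2 * s by ring]
    ring
  have hk : (√m / 2) ^ 2 = m / 4 := by rw [div_pow, sq_sqrt hm]; norm_num
  have hc : 3 * b * (3 * b)⁻¹ ^ 2 = (3 * b)⁻¹ := by
    simpa only [inv_inv, sq, mul_assoc, mul_left_comm] using mul_inv_mul_cancel (3 * b)⁻¹
  rw [hform, deriv_deriv_const_add_mul_tanh_mul]
  dsimp only
  set T := tanh (√m / 2 * s)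
  -- with `w = 1 + ε T`, both sides reduce to `(m / 2) (3b)⁻¹ w (w - 1) (w - 2)`
  linear_combination (-2 * ε * T * (1 - T ^ 2) / (3 * b)) * hk + (-m * ε * T ^ 3 / (6 * b)) * hε
    + (m / 2 * (1 + ε * T) ^ 2 * (3 - (3 * b * (3 * b)⁻¹ + 1) * (1 + ε * T))) * hc

theorem tendsto_layerFront_atTop (b : ℝ) {m : ℝ} (hm : 0 < m) (ε : ℝ) :
    Tendsto (layerFront b m ε) atTop (𝓝 ((1 + ε) / (3 * b))) := by
  have harg : Tendsto (fun s => √m * s / 2) atTop atTop :=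
    (tendsto_id.const_mul_atTop (sqrt_pos.mpr hm)).atTop_div_const two_pos
  have h := ((tendsto_tanh_atTop.comp harg).const_mul ε).const_add 1 |>.div_const (3 * b)
  rwa [mul_one] at h

theorem tendsto_layerFront_atBot (b : ℝ) {m : ℝ} (hm : 0 < m) (ε : ℝ) :
    Tendsto (layerFront b m ε) atBot (𝓝 ((1 - ε) / (3 * b))) := by
  have harg : Tendsto (fun s => √m * s / 2) atBot atBot :=
    (tendsto_id.const_mul_atBot (sqrt_pos.mpr hm)).atBot_div_const two_pos
  have h := ((tendsto_tanh_atBot.comp harg).const_mul ε).const_add 1 |>.div_const (3 * b)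
  rwa [mul_neg_one, ← sub_eq_add_neg] at h

theorem stationary_heteroclinic_loop_general
    (b m : ℝ) (hm : 0 < m) :
    let uf := 9*b*m/2
    let vdv : ℝ → ℝ := fun s => (1/(3*b)) * (1 + Real.tanh (Real.sqrt m * s / 2))
    let vvd : ℝ → ℝ := fun s => (1/(3*b)) * (1 - Real.tanh (Real.sqrt m * s / 2))
    -- both fronts solve the stationary layer equation
    (∀ s : ℝ, deriv (deriv vdv) s = m * vdv s - uf * (vdv s)^2 * (1 - b * vdv s)) ∧
    (∀ s : ℝ, deriv (deriv vvd) s = m * vvd s - uf * (vvd s)^2 * (1 - b * vvd s)) ∧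
    -- desert-to-vegetation asymptotics
    Filter.Tendsto vdv Filter.atBot (nhds 0) ∧
    Filter.Tendsto vdv Filter.atTop (nhds (2/(3*b))) ∧
    -- vegetation-to-desert asymptotics
    Filter.Tendsto vvd Filter.atBot (nhds (2/(3*b))) ∧
    Filter.Tendsto vvd Filter.atTop (nhds 0) := by
  intro uf vdv vvd
  have hdv : vdv = layerFront b m 1 := by funext s; simp only [vdv, layerFront]; ring
  have hvd : vvd = layerFront b m (-1) := by funext s; simp only [vvd, layerFront]; ring
  rw [hdv, hvd]
  refine ⟨layerFront_solves_layer_equation b hm.le (one_pow 2),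
    layerFront_solves_layer_equation b hm.le (by norm_num), ?_, ?_, ?_, ?_⟩
  · simpa using tendsto_layerFront_atBot b hm 1
  · simpa [one_add_one_eq_two] using tendsto_layerFront_atTop b hm 1
  · simpa [one_add_one_eq_two] using tendsto_layerFront_atBot b hm (-1)
  · simpa using tendsto_layerFront_atTop b hm (-1)

/-- At the stationary-front value `u_f = 9bm/2`, the layer problem
`v'' = m v − u_f v²(1 − b v)` possesses a heteroclinic loop: the explicit
fronts `v_dv(s) = (1/(3b))(1 + tanh(√m s/2))` and
`v_vd(s) = (1/(3b))(1 − tanh(√m s/2))` connect the saddle equilibria `0` and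
`v₊(u_f) = 2/(3b)` in the two directions. -/
theorem stationary_heteroclinic_loop
    (b m : ℝ) (hb : 0 < b) (hm : 0 < m) :
    let uf := 9*b*m/2
    let vdv : ℝ → ℝ := fun s => (1/(3*b)) * (1 + Real.tanh (Real.sqrt m * s / 2))
    let vvd : ℝ → ℝ := fun s => (1/(3*b)) * (1 - Real.tanh (Real.sqrt m * s / 2))
    -- both fronts solve the stationary layer equation
    (∀ s : ℝ, deriv (deriv vdv) s = m * vdv s - uf * (vdv s)^2 * (1 - b * vdv s)) ∧
    (∀ s : ℝ, deriv (deriv vvd) s = m * vvd s - uf * (vvd s)^2 * (1 - b * vvd s)) ∧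
    -- desert-to-vegetation asymptotics
    Filter.Tendsto vdv Filter.atBot (nhds 0) ∧
    Filter.Tendsto vdv Filter.atTop (nhds (2/(3*b))) ∧
    -- vegetation-to-desert asymptotics
    Filter.Tendsto vvd Filter.atBot (nhds (2/(3*b))) ∧
    Filter.Tendsto vvd Filter.atTop (nhds 0) :=
  stationary_heteroclinic_loop_general b m hm
end

section
/- Let a,m,b>0 with a/m > 4b + 1/b. Then a/m > 2(b + √(1+b²)), so V₂ := (a/m + √((a/m)² − 4(1 + ab/m)))/(2(1 + ab/m)) and U₂ := m(a/m − V₂/(1 − bV₂)) are well defined; moreover U₂ > 4bm and V₂ = v_+(U₂) := (1 + √(1 − 4bm/U₂))/(2b) (i.e., the vegetated equilibrium lies on the upper branch of the critical manifold). If in addition a/m < 9b/2 + 2/b, then U₂ < 9bm/2. -/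
/-!
Write `s = a/m`. Then `V₂` is the larger root of `(1 + s b) V² - s V + 1`, and this relation
turns `U₂` into `m / (V₂ (1 - b V₂))`. On `1/(2b) < V < 1/b` the map `V ↦ m / (V (1 - b V))`
is inverted by the upper branch `v₊`, since `1 - 4 b m / U = (2 b V - 1)²`; it stays above
`4bm` there, and below `9bm/2` as long as `V < 2/(3b)`. The three bounds on `V₂` come from the
sign of the quadratic at `1/(2b)`, `1/b` and `2/(3b)`.
-/

lemma two_mul_add_sqrt_one_add_sq_lt {b : ℝ} (hb : 0 < b) :
    2 * (b + √(1 + b ^ 2)) < 4 * b + 1 / b := by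
  have hsqrt : √(1 + b ^ 2) < b + 1 / (2 * b) := by
    rw [Real.sqrt_lt' (by positivity)]
    have : (b + 1 / (2 * b)) ^ 2 = 1 + b ^ 2 + (1 / (2 * b)) ^ 2 := by field_simp; ring
    rw [this]
    linarith [show 0 < (1 / (2 * b)) ^ 2 by positivity]
  have : 2 * (1 / (2 * b)) = 1 / b := by field_simp
  linarith

section LargerRoot

variable {A B C : ℝ}

noncomputable def largerRoot (A B C : ℝ) : ℝ := (-B + √(discrim A B C)) / (2 * A)

lemma sq_two_mul_mul_add (A B C c : ℝ) :
    (2 * A * c + B) ^ 2 = 4 * A * (A * (c * c) + B * c + C) + discrim A B C := by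
  rw [discrim]; ring

lemma largerRoot_isRoot (hA : A ≠ 0) (hD : 0 ≤ discrim A B C) :
    A * (largerRoot A B C * largerRoot A B C) + B * largerRoot A B C + C = 0 :=
  (quadratic_eq_zero_iff hA (Real.mul_self_sqrt hD).symm _).2 (Or.inl rfl)

lemma discrim_pos_of_eval_neg {c : ℝ} (hA : 0 < A) (hc : A * (c * c) + B * c + C < 0) :
    0 < discrim A B C := by
  nlinarith [sq_two_mul_mul_add A B C c, sq_nonneg (2 * A * c + B)]

lemma lt_largerRoot {c : ℝ} (hA : 0 < A) (hc : A * (c * c) + B * c + C < 0) :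
    c < largerRoot A B C := by
  have : 2 * A * c + B < √(discrim A B C) := by
    apply Real.lt_sqrt_of_sq_lt
    nlinarith [sq_two_mul_mul_add A B C c]
  rw [largerRoot, lt_div_iff₀ (by positivity)]
  linarith

lemma largerRoot_lt {c : ℝ} (hA : 0 < A) (hc : 0 < A * (c * c) + B * c + C)
    (hvertex : -B / (2 * A) < c) : largerRoot A B C < c := by
  have hpos : 0 < 2 * A * c + B := by
    rw [div_lt_iff₀ (by positivity)] at hvertex
    linarith
  have : √(discrim A B C) < 2 * A * c + B := by
    rw [Real.sqrt_lt' hpos]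
    nlinarith [sq_two_mul_mul_add A B C c]
  rw [largerRoot, div_lt_iff₀ (by positivity)]
  linarith

end LargerRoot

section VegetatedRoot

variable {s b : ℝ}

lemma largerRoot_vegetated_eq :
    largerRoot (1 + s * b) (-s) 1 = (s + √(s ^ 2 - 4 * (1 + s * b))) / (2 * (1 + s * b)) := by
  simp only [largerRoot, discrim, neg_neg, even_two, Even.neg_pow, mul_one]

lemma vegetatedQuadratic_one_div_two_mul_neg (hb : 0 < b) (h1 : 4 * b + 1 / b < s) :
    (1 + s * b) * (1 / (2 * b) * (1 / (2 * b))) + -s * (1 / (2 * b)) + 1 < 0 := by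
  have hsb : 4 * b * b + 1 < s * b := by
    simpa only [add_mul, one_div_mul_cancel hb.ne'] using mul_lt_mul_of_pos_right h1 hb
  have : (1 + s * b) * (1 / (2 * b) * (1 / (2 * b))) + -s * (1 / (2 * b)) + 1
      = (1 + 4 * b * b - s * b) / (4 * b ^ 2) := by field_simp; ring
  rw [this]
  exact div_neg_of_neg_of_pos (by linarith) (by positivity)

lemma largerRoot_lt_one_div (hb : 0 < b) (hs : 0 < s) :
    largerRoot (1 + s * b) (-s) 1 < 1 / b := by
  have hA : 0 < 1 + s * b := by positivity
  apply largerRoot_lt hA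
  · have : (1 + s * b) * (1 / b * (1 / b)) + -s * (1 / b) + 1 = (1 + b ^ 2) / b ^ 2 := by
      field_simp; ring
    rw [this]; positivity
  · rw [neg_neg, div_lt_div_iff₀ (by positivity) hb]
    nlinarith

lemma largerRoot_lt_two_div_three_mul (hb : 0 < b) (hs : 0 < s) (h2 : s < 9 * b / 2 + 2 / b) :
    largerRoot (1 + s * b) (-s) 1 < 2 / (3 * b) := by
  have hsb : s * b < 9 * b * b / 2 + 2 := by
    have := mul_lt_mul_of_pos_right h2 hb
    rwa [add_mul, div_mul_cancel₀ _ hb.ne', div_mul_eq_mul_div] at this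
  have hA : 0 < 1 + s * b := by positivity
  apply largerRoot_lt hA
  · have : (1 + s * b) * (2 / (3 * b) * (2 / (3 * b))) + -s * (2 / (3 * b)) + 1
        = (4 + 9 * b * b - 2 * (s * b)) / (9 * b ^ 2) := by
      field_simp; ring
    rw [this]
    exact div_pos (by linarith) (by positivity)
  · rw [neg_neg, div_lt_div_iff₀ (by positivity) (by positivity)]
    nlinarith

lemma sub_div_one_sub_mul_eq_one_div {V : ℝ} (hV : V ≠ 0) (hbV : 1 - b * V ≠ 0)
    (hroot : (1 + s * b) * (V * V) + -s * V + 1 = 0) :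
    s - V / (1 - b * V) = 1 / (V * (1 - b * V)) := by
  rw [eq_div_iff (mul_ne_zero hV hbV), sub_mul, div_mul_eq_mul_div, mul_div_assoc,
    mul_div_cancel_right₀ _ hbV]
  linear_combination -hroot

end VegetatedRoot

section UpperBranch

noncomputable def upperBranch (b m u : ℝ) : ℝ := (1 + √(1 - 4 * b * m / u)) / (2 * b)

variable {b m V : ℝ}

lemma four_mul_mul_lt_div (hb : 0 < b) (hm : 0 < m) (hV₁ : 1 / (2 * b) < V) (hV₂ : V < 1 / b) :
    4 * b * m < m / (V * (1 - b * V)) := by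
  rw [div_lt_iff₀ (by positivity)] at hV₁
  rw [lt_div_iff₀ hb] at hV₂
  rw [lt_div_iff₀ (mul_pos (by nlinarith) (by linarith))]
  nlinarith [mul_pos hm (pow_pos (by linarith : 0 < 2 * b * V - 1) 2)]

lemma upperBranch_div (hb : 0 < b) (hm : m ≠ 0) (hV₁ : 1 / (2 * b) ≤ V) (hV₂ : V < 1 / b) :
    upperBranch b m (m / (V * (1 - b * V))) = V := by
  rw [div_le_iff₀ (by positivity)] at hV₁
  rw [lt_div_iff₀ hb] at hV₂
  have hV : V ≠ 0 := by rintro rfl; linarith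
  have hbV : 1 - b * V ≠ 0 := by linarith
  have hsq : 1 - 4 * b * m / (m / (V * (1 - b * V))) = (2 * b * V - 1) ^ 2 := by
    field_simp
    ring
  rw [upperBranch, hsq, Real.sqrt_sq (by linarith)]
  field_simp
  ring

lemma div_lt_nine_mul_mul_div_two (hb : 0 < b) (hm : 0 < m) (hV₁ : 1 / (3 * b) < V)
    (hV₂ : V < 2 / (3 * b)) : m / (V * (1 - b * V)) < 9 * b * m / 2 := by
  rw [div_lt_iff₀ (by positivity)] at hV₁
  rw [lt_div_iff₀ (by positivity)] at hV₂
  rw [div_lt_iff₀ (mul_pos (by nlinarith) (by nlinarith))]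
  have h3 : 0 < (3 * b * V - 1) * (2 - 3 * b * V) := mul_pos (by linarith) (by linarith)
  nlinarith [mul_pos hm h3]

end UpperBranch

theorem vegetated_state_upper_branch_general
    (a m b : ℝ) (hm : 0 < m) (hb : 0 < b)
    (h1 : 4*b + 1/b < a/m) :
    2*(b + Real.sqrt (1 + b^2)) < a/m ∧
    (let V₂ := (a/m + Real.sqrt ((a/m)^2 - 4*(1 + a*b/m))) / (2*(1 + a*b/m))
     let U₂ := m * (a/m - V₂ / (1 - b*V₂))
     4*b*m < U₂ ∧
     V₂ = (1 + Real.sqrt (1 - 4*b*m/U₂)) / (2*b) ∧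
     (a/m < 9*b/2 + 2/b → U₂ < 9*b*m/2)) := by
  refine ⟨(two_mul_add_sqrt_one_add_sq_lt hb).trans h1, ?_⟩
  rw [mul_div_right_comm a b m, ← largerRoot_vegetated_eq]
  set s := a / m
  have hs : 0 < s := by have := one_div_pos.2 hb; linarith
  have hA : 0 < 1 + s * b := by positivity
  have hq := vegetatedQuadratic_one_div_two_mul_neg hb h1
  set V := largerRoot (1 + s * b) (-s) 1
  have hV₁ : 1 / (2 * b) < V := lt_largerRoot hA hq
  have hV₂ : V < 1 / b := largerRoot_lt_one_div hb hs
  have hV : V ≠ 0 := (lt_trans (by positivity) hV₁).ne'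
  have hbV : 1 - b * V ≠ 0 := by rw [lt_div_iff₀ hb] at hV₂; linarith
  have hU : m * (s - V / (1 - b * V)) = m / (V * (1 - b * V)) := by
    rw [sub_div_one_sub_mul_eq_one_div hV hbV
      (largerRoot_isRoot hA.ne' (discrim_pos_of_eval_neg hA hq).le), mul_one_div]
  intro V₂ U₂
  show 4 * b * m < m * (s - V / (1 - b * V)) ∧ V = upperBranch b m (m * (s - V / (1 - b * V))) ∧
    (s < 9 * b / 2 + 2 / b → m * (s - V / (1 - b * V)) < 9 * b * m / 2)
  rw [hU]
  refine ⟨four_mul_mul_lt_div hb hm hV₁ hV₂, (upperBranch_div hb hm.ne' hV₁.le hV₂).symm,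
    fun h2 => div_lt_nine_mul_mul_div_two hb hm ?_ (largerRoot_lt_two_div_three_mul hb hs h2)⟩
  exact (one_div_lt_one_div_of_lt (by positivity) (by linarith)).trans hV₁

/-- If `a/m > 4b + 1/b` then the vegetated steady state `(U₂, V₂)` is well
defined, `U₂ > 4bm`, and `V₂ = v₊(U₂)` (the vegetated equilibrium lies on the
upper branch of the critical manifold); if moreover `a/m < 9b/2 + 2/b`, then
`U₂ < 9bm/2`. -/
theorem vegetated_state_upper_branch
    (a m b : ℝ) (ha : 0 < a) (hm : 0 < m) (hb : 0 < b)
    (h1 : 4*b + 1/b < a/m) :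
    2*(b + Real.sqrt (1 + b^2)) < a/m ∧
    (let V₂ := (a/m + Real.sqrt ((a/m)^2 - 4*(1 + a*b/m))) / (2*(1 + a*b/m))
     let U₂ := m * (a/m - V₂ / (1 - b*V₂))
     4*b*m < U₂ ∧
     V₂ = (1 + Real.sqrt (1 - 4*b*m/U₂)) / (2*b) ∧
     (a/m < 9*b/2 + 2/b → U₂ < 9*b*m/2)) :=
  vegetated_state_upper_branch_general a m b hm hb h1
end

section
/- For r > 0 and ν ∈ {0,1,2} define K_ν(r) := ∫₀^∞ e^{−r cosh t} cosh(ν t) dt. Then for every r > 0 one has K₁(r)² − (1/2) K₂(r) K₀(r) − (1/2) K₀(r)² < 0, and consequently the function r ↦ K₁(r)/K₀(r) is strictly decreasing on (0,∞). In particular, for a > u_f the far-field slope function p_out(r) := (a − u_f) K₁(r)/K₀(r) satisfies p_out'(r) < 0 for all r > 0. -/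
/-!
Differentiating under the integral sign and using `2 cosh t cosh νt = cosh (ν-1)t + cosh (ν+1)t`
gives `K_ν' = -(K_{ν-1} + K_{ν+1}) / 2`, hence `K₀' = -K₁`, `K₁' = -(K₀ + K₂) / 2` and
`(K₁/K₀)' = (K₁² - (K₀ + K₂) K₀ / 2) / K₀²`. The numerator is negative by a strict
Cauchy–Schwarz inequality for the weight `e^{-r cosh t}`: with `c = K₁/K₀`,
`0 < ∫₀^∞ e^{-r cosh t} (cosh t - c)² dt = (K₀ + K₂)/2 - K₁²/K₀`,
strictly because `cosh t = c` for at most one `t > 0`.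
-/

open Real MeasureTheory Set Filter

noncomputable def besselK (ν : ℝ) (r : ℝ) : ℝ :=
  ∫ t in Set.Ioi (0:ℝ), Real.exp (-r * Real.cosh t) * Real.cosh (ν * t)

theorem MeasureTheory.setIntegral_pos_of_ae_pos {α : Type*} [MeasurableSpace α] {μ : Measure α}
    {s : Set α} {f : α → ℝ} (hs : μ s ≠ 0) (hf : IntegrableOn f s μ)
    (hpos : ∀ᵐ x ∂μ.restrict s, 0 < f x) : 0 < ∫ x in s, f x ∂μ := by
  have hsupp : Function.support f =ᵐ[μ.restrict s] univ :=
    ae_eq_univ.2 (mem_ae_iff.1 (hpos.mono fun _ hx => hx.ne'))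
  rw [integral_pos_iff_support_of_nonneg_ae (hpos.mono fun _ hx => hx.le) hf,
    measure_congr hsupp, Measure.restrict_apply_univ]
  exact pos_iff_ne_zero.2 hs

namespace Real

theorem cosh_le_exp_abs (x : ℝ) : cosh x ≤ exp |x| := by
  rw [cosh_eq]
  have h₁ : exp x ≤ exp |x| := exp_le_exp.2 (le_abs_self x)
  have h₂ : exp (-x) ≤ exp |x| := exp_le_exp.2 (neg_le_abs x)
  linarith

theorem sq_div_four_le_cosh (x : ℝ) : x ^ 2 / 4 ≤ cosh x := by
  have h₁ := quadratic_le_exp_of_nonneg (abs_nonneg x)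
  have h₂ : exp |x| / 2 ≤ cosh x := by
    rw [← cosh_abs, cosh_eq]
    linarith [exp_pos (-|x|)]
  nlinarith [abs_nonneg x, sq_abs x]

theorem cosh_mul_le_exp_abs_mul (ν : ℝ) {t : ℝ} (ht : 0 ≤ t) : cosh (ν * t) ≤ exp (|ν| * t) := by
  simpa [abs_mul, abs_of_nonneg ht] using cosh_le_exp_abs (ν * t)

end Real

theorem integrableOn_exp_neg_mul_cosh_add_mul {r : ℝ} (hr : 0 < r) (m : ℝ) :
    IntegrableOn (fun t => exp (-r * cosh t + m * t)) (Ioi 0) := by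
  refine Integrable.mono' ((exp_neg_integrableOn_Ioi 0 one_pos).const_mul (exp ((m + 1) ^ 2 / r)))
    (by fun_prop) ((ae_restrict_iff' measurableSet_Ioi).2 (ae_of_all _ fun t _ => ?_))
  -- `r cosh t ≥ r t² / 4` beats the linear growth `(m + 1) t`
  have hquad : (m + 1) * t - r * (t ^ 2 / 4) ≤ (m + 1) ^ 2 / r := by
    rw [le_div_iff₀ hr]
    nlinarith [sq_nonneg (r * t - 2 * (m + 1))]
  have hcosh := mul_le_mul_of_nonneg_left (sq_div_four_le_cosh t) hr.le
  rw [norm_of_nonneg (exp_pos _).le, ← exp_add]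
  exact exp_le_exp.2 (by linarith)

theorem exp_neg_mul_cosh_mul_cosh_le (r ν : ℝ) {t : ℝ} (ht : 0 ≤ t) :
    exp (-r * cosh t) * cosh (ν * t) ≤ exp (-r * cosh t + |ν| * t) := by
  rw [exp_add]
  gcongr
  exact cosh_mul_le_exp_abs_mul ν ht

theorem integrableOn_besselK_integrand (ν : ℝ) {r : ℝ} (hr : 0 < r) :
    IntegrableOn (fun t => exp (-r * cosh t) * cosh (ν * t)) (Ioi 0) := by
  refine Integrable.mono' (integrableOn_exp_neg_mul_cosh_add_mul hr |ν|) (by fun_prop)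
    ((ae_restrict_iff' measurableSet_Ioi).2 (ae_of_all _ fun t ht => ?_))
  rw [norm_of_nonneg (by positivity)]
  exact exp_neg_mul_cosh_mul_cosh_le r ν ht.le

theorem besselK_pos (ν : ℝ) {r : ℝ} (hr : 0 < r) : 0 < besselK ν r :=
  setIntegral_pos_of_ae_pos (by simp [volume_Ioi]) (integrableOn_besselK_integrand ν hr)
    (ae_of_all _ fun _ => by positivity)

theorem besselK_neg (ν r : ℝ) : besselK (-ν) r = besselK ν r := by
  simp only [besselK, neg_mul ν, cosh_neg]

theorem cosh_mul_besselK_integrand (r ν t : ℝ) :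
    cosh t * (exp (-r * cosh t) * cosh (ν * t)) =
      (exp (-r * cosh t) * cosh ((ν - 1) * t) + exp (-r * cosh t) * cosh ((ν + 1) * t)) / 2 := by
  rw [sub_mul, add_mul, one_mul, cosh_sub, cosh_add]
  ring

theorem integral_cosh_mul_besselK_integrand (ν : ℝ) {r : ℝ} (hr : 0 < r) :
    ∫ t in Ioi 0, cosh t * (exp (-r * cosh t) * cosh (ν * t)) =
      (besselK (ν - 1) r + besselK (ν + 1) r) / 2 := by
  simp_rw [cosh_mul_besselK_integrand]
  rw [integral_div, integral_add (integrableOn_besselK_integrand _ hr)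
    (integrableOn_besselK_integrand _ hr), besselK, besselK]

theorem cosh_mul_besselK_integrand_le {r x : ℝ} (ν : ℝ) {t : ℝ} (hx : r ≤ x) (ht : 0 ≤ t) :
    cosh t * (exp (-x * cosh t) * cosh (ν * t)) ≤ exp (-r * cosh t + (|ν| + 1) * t) :=
  calc cosh t * (exp (-x * cosh t) * cosh (ν * t))
      ≤ exp t * exp (-r * cosh t + |ν| * t) := by
        gcongr
        · simpa using cosh_mul_le_exp_abs_mul 1 ht
        · refine (exp_neg_mul_cosh_mul_cosh_le x ν ht).trans (exp_le_exp.2 ?_)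
          nlinarith [cosh_pos t]
    _ = exp (-r * cosh t + (|ν| + 1) * t) := by
        rw [← exp_add]
        ring_nf

theorem hasDerivAt_besselK (ν : ℝ) {r : ℝ} (hr : 0 < r) :
    HasDerivAt (besselK ν) (-(besselK (ν - 1) r + besselK (ν + 1) r) / 2) r := by
  have hF' (t x : ℝ) : HasDerivAt (fun x => exp (-x * cosh t) * cosh (ν * t))
      (-(cosh t * (exp (-x * cosh t) * cosh (ν * t)))) x :=
    (((hasDerivAt_neg x).mul_const (cosh t)).exp.mul_const (cosh (ν * t))).congr_deriv (by ring)
  have hbound : ∀ᵐ t ∂volume.restrict (Ioi 0), ∀ x ∈ Metric.ball r (r / 2),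
      ‖-(cosh t * (exp (-x * cosh t) * cosh (ν * t)))‖ ≤
        exp (-(r / 2) * cosh t + (|ν| + 1) * t) := by
    refine (ae_restrict_iff' measurableSet_Ioi).2 (ae_of_all _ fun t ht x hx => ?_)
    rw [Metric.mem_ball, dist_eq, abs_lt] at hx
    rw [norm_neg, norm_of_nonneg (by positivity)]
    exact cosh_mul_besselK_integrand_le ν (by linarith) ht.le
  have key := hasDerivAt_integral_of_dominated_loc_of_deriv_le
    (F := fun x t => exp (-x * cosh t) * cosh (ν * t)) (Metric.ball_mem_nhds r (half_pos hr))
    (Eventually.of_forall fun x => (by fun_prop : Continuous _).aestronglyMeasurable)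
    (integrableOn_besselK_integrand ν hr) (by fun_prop : Continuous _).aestronglyMeasurable
    hbound (integrableOn_exp_neg_mul_cosh_add_mul (half_pos hr) (|ν| + 1))
    (ae_of_all _ fun t x _ => hF' t x)
  rw [neg_div, ← integral_cosh_mul_besselK_integrand ν hr, ← integral_neg]
  exact key.2

theorem hasDerivAt_besselK_zero {r : ℝ} (hr : 0 < r) : HasDerivAt (besselK 0) (-besselK 1 r) r := by
  simpa [besselK_neg] using hasDerivAt_besselK 0 hr

theorem hasDerivAt_besselK_one {r : ℝ} (hr : 0 < r) :
    HasDerivAt (besselK 1) (-(besselK 0 r + besselK 2 r) / 2) r := by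
  simpa [one_add_one_eq_two] using hasDerivAt_besselK 1 hr

theorem integrableOn_cosh_mul_besselK_integrand (ν : ℝ) {r : ℝ} (hr : 0 < r) :
    IntegrableOn (fun t => cosh t * (exp (-r * cosh t) * cosh (ν * t))) (Ioi 0) := by
  simp_rw [cosh_mul_besselK_integrand]
  exact ((integrableOn_besselK_integrand _ hr).add (integrableOn_besselK_integrand _ hr)).div_const 2

theorem exp_neg_mul_cosh_mul_sq_sub (r c t : ℝ) :
    exp (-r * cosh t) * (cosh t - c) ^ 2 =
      cosh t * (exp (-r * cosh t) * cosh (1 * t)) - 2 * c * (exp (-r * cosh t) * cosh (1 * t))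
        + c ^ 2 * (exp (-r * cosh t) * cosh (0 * t)) := by
  rw [one_mul, zero_mul, cosh_zero]
  ring

theorem integrableOn_exp_neg_mul_cosh_mul_sq_sub {r : ℝ} (hr : 0 < r) (c : ℝ) :
    IntegrableOn (fun t => exp (-r * cosh t) * (cosh t - c) ^ 2) (Ioi 0) := by
  simp_rw [exp_neg_mul_cosh_mul_sq_sub]
  exact ((integrableOn_cosh_mul_besselK_integrand 1 hr).sub
    ((integrableOn_besselK_integrand 1 hr).const_mul _)).add
    ((integrableOn_besselK_integrand 0 hr).const_mul _)

theorem integral_exp_neg_mul_cosh_mul_sq_sub {r : ℝ} (hr : 0 < r) (c : ℝ) :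
    ∫ t in Ioi 0, exp (-r * cosh t) * (cosh t - c) ^ 2 =
      (besselK 0 r + besselK 2 r) / 2 - 2 * c * besselK 1 r + c ^ 2 * besselK 0 r := by
  have hcosh := integrableOn_cosh_mul_besselK_integrand 1 hr
  have h₁ := (integrableOn_besselK_integrand 1 hr).const_mul (2 * c)
  simp_rw [exp_neg_mul_cosh_mul_sq_sub]
  rw [integral_add (hcosh.sub' h₁)
      ((integrableOn_besselK_integrand 0 hr).const_mul _),
    integral_sub hcosh h₁, integral_cosh_mul_besselK_integrand 1 hr, integral_const_mul,
    integral_const_mul]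
  norm_num [besselK]

theorem integral_exp_neg_mul_cosh_mul_sq_sub_pos {r : ℝ} (hr : 0 < r) (c : ℝ) :
    0 < ∫ t in Ioi 0, exp (-r * cosh t) * (cosh t - c) ^ 2 := by
  have hnull : volume {t | 0 < t ∧ cosh t = c} = 0 :=
    Set.Subsingleton.measure_zero (fun x hx y hy =>
      cosh_strictMonoOn.injOn (le_of_lt hx.1) (le_of_lt hy.1) (hx.2.trans hy.2.symm)) _
  refine setIntegral_pos_of_ae_pos (by simp [volume_Ioi])
    (integrableOn_exp_neg_mul_cosh_mul_sq_sub hr c)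
    ((ae_restrict_iff' measurableSet_Ioi).2 (ae_iff.2 (measure_mono_null (fun t ht => ?_) hnull)))
  obtain ⟨ht₀, hnonpos⟩ := Classical.not_imp.1 ht
  refine ⟨ht₀, by_contra fun hne => hnonpos ?_⟩
  have := sub_ne_zero.2 hne
  positivity

theorem besselK_one_sq_lt {r : ℝ} (hr : 0 < r) :
    besselK 1 r ^ 2 < (besselK 0 r + besselK 2 r) / 2 * besselK 0 r := by
  have hK₀ := besselK_pos 0 hr
  have hpos := integral_exp_neg_mul_cosh_mul_sq_sub_pos hr (besselK 1 r / besselK 0 r)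
  rw [integral_exp_neg_mul_cosh_mul_sq_sub hr] at hpos
  have hfactor : (besselK 0 r + besselK 2 r) / 2 * besselK 0 r - besselK 1 r ^ 2 =
      besselK 0 r * ((besselK 0 r + besselK 2 r) / 2 - 2 * (besselK 1 r / besselK 0 r) * besselK 1 r
        + (besselK 1 r / besselK 0 r) ^ 2 * besselK 0 r) := by
    field_simp
    ring
  linarith [mul_pos hK₀ hpos]

theorem hasDerivAt_besselK_ratio {r : ℝ} (hr : 0 < r) :
    HasDerivAt (fun r => besselK 1 r / besselK 0 r)
      ((besselK 1 r ^ 2 - (besselK 0 r + besselK 2 r) / 2 * besselK 0 r) / besselK 0 r ^ 2) r :=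
  ((hasDerivAt_besselK_one hr).div (hasDerivAt_besselK_zero hr) (besselK_pos 0 hr).ne').congr_deriv
    (by ring)

theorem deriv_besselK_ratio_neg {r : ℝ} (hr : 0 < r) :
    deriv (fun r => besselK 1 r / besselK 0 r) r < 0 := by
  rw [(hasDerivAt_besselK_ratio hr).deriv]
  exact div_neg_of_neg_of_pos (by linarith [besselK_one_sq_lt hr]) (pow_pos (besselK_pos 0 hr) 2)

/-- For every `r > 0` one has `K₁(r)² − (1/2)K₂(r)K₀(r) − (1/2)K₀(r)² < 0`;
consequently `r ↦ K₁(r)/K₀(r)` is strictly decreasing on `(0,∞)`, and for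
`a > u_f` the far-field slope function `p_out(r) = (a − u_f)K₁(r)/K₀(r)` has
strictly negative derivative on `(0,∞)`. -/
theorem besselK_ratio_strictly_decreasing :
    (∀ r : ℝ, 0 < r →
      (besselK 1 r)^2 - (1/2) * besselK 2 r * besselK 0 r
        - (1/2) * (besselK 0 r)^2 < 0) ∧
    StrictAntiOn (fun r => besselK 1 r / besselK 0 r) (Set.Ioi 0) ∧
    (∀ a uf : ℝ, uf < a → ∀ r ∈ Set.Ioi (0:ℝ),
      deriv (fun r => (a - uf) * besselK 1 r / besselK 0 r) r < 0) := by
  refine ⟨fun r hr => by linarith [besselK_one_sq_lt hr], ?_, fun a uf hlt r hr => ?_⟩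
  · refine strictAntiOn_of_deriv_neg (convex_Ioi 0)
      (HasDerivAt.continuousOn fun r hr => hasDerivAt_besselK_ratio hr) fun r hr => ?_
    rw [interior_Ioi] at hr
    exact deriv_besselK_ratio_neg hr
  · have hscale : (fun r => (a - uf) * besselK 1 r / besselK 0 r) =
        fun r => (a - uf) * (besselK 1 r / besselK 0 r) :=
      funext fun r => mul_div_assoc _ _ _
    rw [hscale, deriv_const_mul _ (hasDerivAt_besselK_ratio hr).differentiableAt]
    exact mul_neg_of_pos_of_neg (sub_pos.2 hlt) (deriv_besselK_ratio_neg hr)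
end

section
/- Let 0 < r₀ < R, let f : ℝ → ℝ be differentiable with f'(x) > 0 for all x, and let u, p : [r₀, R] → ℝ be differentiable functions satisfying u'(r) = p(r) and p'(r) = −p(r)/r + f(u(r)) for all r ∈ [r₀, R]. If p(r₀) > 0 and f(u(r₀)) > p(r₀)/r₀, then p is nondecreasing on [r₀, R]; in particular p(r) ≥ p(r₀) > 0 and u(r) ≥ u(r₀) + p(r₀)(r − r₀) for all r ∈ [r₀, R]. -/
open Real Set Filter Topology

/-- Monotonicity lemma for the reduced slow flow `u' = p`, `p' = −p/r + f(u)`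
with `f' > 0`: if `p(r₀) > 0` and `p'(r₀) > 0` (i.e. `f(u(r₀)) > p(r₀)/r₀`),
then `p` is nondecreasing on `[r₀, R]`, so `p(r) ≥ p(r₀) > 0` and
`u(r) ≥ u(r₀) + p(r₀)(r − r₀)` (Lemma 3.5 of the paper). -/
theorem slow_flow_p_nondecreasing
    (r₀ R : ℝ) (hr₀ : 0 < r₀) (hR : r₀ < R)
    (f : ℝ → ℝ) (hf : Differentiable ℝ f) (hf' : ∀ x : ℝ, 0 < deriv f x)
    (u p : ℝ → ℝ)
    (hu : ∀ r ∈ Set.Icc r₀ R, HasDerivAt u (p r) r)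
    (hp : ∀ r ∈ Set.Icc r₀ R, HasDerivAt p (-(p r)/r + f (u r)) r)
    (hp₀ : 0 < p r₀)
    (hinit : p r₀ / r₀ < f (u r₀)) :
    MonotoneOn p (Set.Icc r₀ R) ∧
    (∀ r ∈ Set.Icc r₀ R, p r₀ ≤ p r) ∧
    (∀ r ∈ Set.Icc r₀ R, u r₀ + p r₀ * (r - r₀) ≤ u r) := by
  set g : ℝ → ℝ := fun r => -(p r / r) + f (u r) with hg_def
  have hpos : ∀ r ∈ Icc r₀ R, (0:ℝ) < r := fun r hr => lt_of_lt_of_le hr₀ hr.1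
  have hp' : ∀ r ∈ Icc r₀ R, HasDerivAt p (g r) r := by
    intro r hr
    simpa [hg_def, neg_div] using hp r hr
  have hpc : ContinuousOn p (Icc r₀ R) :=
    fun r hr => ((hp' r hr).continuousAt).continuousWithinAt
  have huc : ContinuousOn u (Icc r₀ R) :=
    fun r hr => ((hu r hr).continuousAt).continuousWithinAt
  have hgc : ContinuousOn g (Icc r₀ R) := by
    apply ContinuousOn.add
    · exact (hpc.div continuousOn_id (fun r hr => (hpos r hr).ne')).neg
    · exact hf.continuous.comp_continuousOn huc
  have hg₀ : 0 < g r₀ := by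
    have : p r₀ / r₀ < f (u r₀) := hinit
    simp only [hg_def]
    linarith
  -- main claim : g > 0 on the interval
  have key : ∀ r ∈ Icc r₀ R, 0 < g r := by
    by_contra hcon
    push_neg at hcon
    obtain ⟨r₁, hr₁, hgr₁⟩ := hcon
    set Z : Set ℝ := {r | r ∈ Icc r₀ R ∧ g r ≤ 0} with hZdef
    have hZne : Z.Nonempty := ⟨r₁, hr₁, hgr₁⟩
    have hZbdd : BddBelow Z := ⟨r₀, fun z hz => hz.1.1⟩
    have hZclosed : IsClosed Z := by
      have : Z = Icc r₀ R ∩ g ⁻¹' Iic 0 := rfl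
      rw [this]
      exact hgc.preimage_isClosed_of_isClosed isClosed_Icc isClosed_Iic
    set s := sInf Z with hs_def
    have hsZ : s ∈ Z := hZclosed.csInf_mem hZne hZbdd
    have hsIcc : s ∈ Icc r₀ R := hsZ.1
    have hgs : g s ≤ 0 := hsZ.2
    have hs_pos : 0 < s := hpos s hsIcc
    have hs_gt : r₀ < s := by
      rcases lt_or_eq_of_le hsIcc.1 with h | h
      · exact h
      · exact absurd (h ▸ hgs) (not_le.mpr hg₀)
    have hlt : ∀ r ∈ Ico r₀ s, 0 < g r := by
      intro r hr
      by_contra h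
      exact absurd (csInf_le hZbdd (⟨⟨hr.1, hr.2.le.trans hsIcc.2⟩, not_lt.mp h⟩ : r ∈ Z))
        (not_le.mpr hr.2)
    -- p is strictly increasing on [r₀, s], so p s > 0
    have hsub : Icc r₀ s ⊆ Icc r₀ R := Icc_subset_Icc le_rfl hsIcc.2
    have hmonos : StrictMonoOn p (Icc r₀ s) := by
      apply strictMonoOn_of_deriv_pos (convex_Icc _ _) (hpc.mono hsub)
      intro x hx
      rw [interior_Icc] at hx
      rw [(hp' x (hsub (Ioo_subset_Icc_self hx))).deriv]
      exact hlt x ⟨hx.1.le, hx.2⟩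
    have hps : 0 < p s :=
      hp₀.trans (hmonos (left_mem_Icc.mpr hs_gt.le) (right_mem_Icc.mpr hs_gt.le) hs_gt)
    -- derivative of g at s is positive
    have hd1 : HasDerivAt (fun r => p r / r) ((g s * s - p s * 1) / s ^ 2) s :=
      (hp' s hsIcc).div (hasDerivAt_id s) hs_pos.ne'
    have hd2 : HasDerivAt (fun r => f (u r)) (deriv f (u s) * p s) s :=
      ((hf (u s)).hasDerivAt).comp s (hu s hsIcc)
    have hgd : HasDerivAt g (-((g s * s - p s * 1) / s ^ 2) + deriv f (u s) * p s) s :=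
      hd1.neg.add hd2
    have hd_pos : 0 < -((g s * s - p s * 1) / s ^ 2) + deriv f (u s) * p s := by
      have h1 : g s * s - p s * 1 < 0 := by
        have := mul_nonpos_of_nonpos_of_nonneg hgs hs_pos.le
        linarith
      have h2 : (g s * s - p s * 1) / s ^ 2 < 0 :=
        div_neg_of_neg_of_pos h1 (pow_pos hs_pos 2)
      have h3 := mul_pos (hf' (u s)) hps
      linarith
    -- slope argument: g must be negative slightly left of s, contradiction
    have hslope : Tendsto (slope g s) (𝓝[<] s) (𝓝 (-((g s * s - p s * 1) / s ^ 2) + deriv f (u s) * p s)) :=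
      (hasDerivAt_iff_tendsto_slope.mp hgd).mono_left
        (nhdsWithin_mono s (fun x hx => ne_of_lt hx))
    have hev1 : ∀ᶠ r in 𝓝[<] s, 0 < slope g s r :=
      hslope.eventually (eventually_gt_nhds hd_pos)
    have hev2 : ∀ᶠ r in 𝓝[<] s, r ∈ Ioo r₀ s :=
      eventually_of_mem (Ioo_mem_nhdsLT_of_mem ⟨hs_gt, le_rfl⟩) (fun x hx => hx)
    obtain ⟨r, hr_slope, hr_mem⟩ := (hev1.and hev2).exists
    have hgr_pos : 0 < g r := hlt r ⟨hr_mem.1.le, hr_mem.2⟩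
    have hslope_eq : slope g s r = (g r - g s) / (r - s) := slope_def_field g s r
    have hneg : g r - g s < 0 := by
      by_contra h
      push_neg at h
      have : (g r - g s) / (r - s) ≤ 0 :=
        div_nonpos_of_nonneg_of_nonpos h (by linarith [hr_mem.2])
      rw [hslope_eq] at hr_slope
      linarith
    linarith
  -- conclusions
  have hmono : StrictMonoOn p (Icc r₀ R) := by
    apply strictMonoOn_of_deriv_pos (convex_Icc _ _) hpc
    intro x hx
    rw [interior_Icc] at hx
    rw [(hp' x (Ioo_subset_Icc_self hx)).deriv]
    exact key x (Ioo_subset_Icc_self hx)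
  have hple : ∀ r ∈ Icc r₀ R, p r₀ ≤ p r := by
    intro r hr
    exact hmono.monotoneOn (left_mem_Icc.mpr (hR.le)) hr hr.1
  refine ⟨hmono.monotoneOn, hple, ?_⟩
  have hw : MonotoneOn (fun r => u r - p r₀ * r) (Icc r₀ R) := by
    apply monotoneOn_of_deriv_nonneg (convex_Icc _ _)
    · exact huc.sub ((continuous_const.mul continuous_id).continuousOn)
    · intro x hx
      rw [interior_Icc] at hx
      exact (((hu x (Ioo_subset_Icc_self hx)).sub
        ((hasDerivAt_id x).const_mul (p r₀))).differentiableAt).differentiableWithinAt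
    · intro x hx
      rw [interior_Icc] at hx
      have hd : HasDerivAt (fun r => u r - p r₀ * r) (p x - p r₀ * 1) x :=
        (hu x (Ioo_subset_Icc_self hx)).sub ((hasDerivAt_id x).const_mul (p r₀))
      rw [hd.deriv]
      have := hple x (Ioo_subset_Icc_self hx)
      linarith
  intro r hr
  have := hw (left_mem_Icc.mpr hR.le) hr hr.1
  simp only at this
  nlinarith [this]
end

section
/- Let 0 < r₀ < R, let f : ℝ → ℝ be differentiable with f'(x) > 0 for all x, and let (u₁, p₁) and (u₂, p₂) be two differentiable solutions on [r₀, R] of the system u' = p, p' = −p/r + f(u). If u₁(r₀) < u₂(r₀) and p₁(r₀) < p₂(r₀), then p₁(r) < p₂(r) and u₁(r) < u₂(r) for all r ∈ [r₀, R]. -/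
/-!
Write `P = p₂ - p₁` and `U = u₂ - u₁`. As long as both are positive, `U' = P > 0` makes `U`
increase, and `(r P)' = r (f u₂ - f u₁) > 0` makes `r P` increase, because multiplying by `r`
cancels the damping term `-P/r`. Hence neither can reach zero at a first time `s > r₀`.
-/

open Set

theorem ContinuousOn.forall_Icc_pos_of_Ico_pos {g : ℝ → ℝ} {a b : ℝ}
    (hg : ContinuousOn g (Icc a b)) (ha : 0 < g a)
    (hstep : ∀ s ∈ Ioc a b, (∀ x ∈ Ico a s, 0 < g x) → 0 < g s) :
    ∀ x ∈ Icc a b, 0 < g x := by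
  by_contra! hneg
  set T := Icc a b ∩ g ⁻¹' Iic 0
  have hT : IsCompact T :=
    isCompact_Icc.of_isClosed_subset (hg.preimage_isClosed_of_isClosed isClosed_Icc isClosed_Iic)
      inter_subset_left
  obtain ⟨s, ⟨hsI, hs0⟩, hsmin⟩ := hT.exists_isLeast hneg
  have has : a < s := hsI.1.lt_of_ne fun h => (h ▸ hs0 : g a ≤ 0).not_gt ha
  have hbefore : ∀ x ∈ Ico a s, 0 < g x := fun x hx => by
    by_contra! hx0
    exact hx.2.not_ge (hsmin ⟨⟨hx.1, hx.2.le.trans hsI.2⟩, hx0⟩)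
  exact (hstep s ⟨has, hsI.2⟩ hbefore).not_ge hs0

theorem le_of_hasDerivAt_of_nonneg {g g' : ℝ → ℝ} {a b : ℝ} (hab : a ≤ b)
    (hg : ∀ x ∈ Icc a b, HasDerivAt g (g' x) x) (hg' : ∀ x ∈ Ioo a b, 0 ≤ g' x) :
    g a ≤ g b := by
  have hmono : MonotoneOn g (Icc a b) := by
    refine monotoneOn_of_hasDerivWithinAt_nonneg (f' := g') (convex_Icc a b)
      (fun x hx => (hg x hx).continuousAt.continuousWithinAt) (fun x hx => ?_) ?_
    · rw [interior_Icc] at hx ⊢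
      exact (hg x (Ioo_subset_Icc_self hx)).hasDerivWithinAt
    · simpa only [interior_Icc] using hg'
  exact hmono (left_mem_Icc.2 hab) (right_mem_Icc.2 hab) hab

theorem HasDerivAt.id_mul_of_damped {p : ℝ → ℝ} {F r : ℝ} (hr : r ≠ 0)
    (hp : HasDerivAt p (-(p r) / r + F) r) :
    HasDerivAt (fun x => x * p x) (r * F) r := by
  refine ((hasDerivAt_id' r).mul hp).congr_deriv ?_
  field_simp
  ring

theorem slow_flow_comparison_general
    (r₀ R : ℝ) (hr₀ : 0 < r₀)
    (f : ℝ → ℝ) (hf' : ∀ x : ℝ, 0 < deriv f x)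
    (u₁ p₁ u₂ p₂ : ℝ → ℝ)
    (hu₁ : ∀ r ∈ Set.Icc r₀ R, HasDerivAt u₁ (p₁ r) r)
    (hp₁ : ∀ r ∈ Set.Icc r₀ R, HasDerivAt p₁ (-(p₁ r)/r + f (u₁ r)) r)
    (hu₂ : ∀ r ∈ Set.Icc r₀ R, HasDerivAt u₂ (p₂ r) r)
    (hp₂ : ∀ r ∈ Set.Icc r₀ R, HasDerivAt p₂ (-(p₂ r)/r + f (u₂ r)) r)
    (hu₀ : u₁ r₀ < u₂ r₀) (hp₀ : p₁ r₀ < p₂ r₀) :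
    ∀ r ∈ Set.Icc r₀ R, p₁ r < p₂ r ∧ u₁ r < u₂ r := by
  have hfmono : StrictMono f := strictMono_of_deriv_pos hf'
  have hU (r) (hr : r ∈ Icc r₀ R) : HasDerivAt (fun x => u₂ x - u₁ x) (p₂ r - p₁ r) r :=
    (hu₂ r hr).sub (hu₁ r hr)
  have hP (r) (hr : r ∈ Icc r₀ R) : HasDerivAt (fun x => p₂ x - p₁ x)
      (-(p₂ r - p₁ r) / r + (f (u₂ r) - f (u₁ r))) r :=
    ((hp₂ r hr).sub (hp₁ r hr)).congr_deriv (by ring)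
  suffices ∀ r ∈ Icc r₀ R, 0 < min (p₂ r - p₁ r) (u₂ r - u₁ r) from
    fun r hr => by simpa only [lt_min_iff, sub_pos] using this r hr
  refine ContinuousOn.forall_Icc_pos_of_Ico_pos
    (fun r hr => ((hP r hr).continuousAt.inf (hU r hr).continuousAt).continuousWithinAt)
    (lt_min (sub_pos.2 hp₀) (sub_pos.2 hu₀)) fun s hs hbefore => ?_
  have hsub : Icc r₀ s ⊆ Icc r₀ R := Icc_subset_Icc_right hs.2
  have hpos (x) (hx : x ∈ Ioo r₀ s) : 0 < p₂ x - p₁ x ∧ 0 < u₂ x - u₁ x :=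
    lt_min_iff.1 (hbefore x (Ioo_subset_Ico_self hx))
  have hUs : u₂ r₀ - u₁ r₀ ≤ u₂ s - u₁ s :=
    le_of_hasDerivAt_of_nonneg hs.1.le (fun x hx => hU x (hsub hx)) fun x hx => (hpos x hx).1.le
  have hPs : r₀ * (p₂ r₀ - p₁ r₀) ≤ s * (p₂ s - p₁ s) :=
    le_of_hasDerivAt_of_nonneg hs.1.le
      (fun x hx => (hP x (hsub hx)).id_mul_of_damped (hr₀.trans_le hx.1).ne')
      fun x hx => mul_nonneg (hr₀.trans hx.1).le
        (sub_nonneg.2 (hfmono (sub_pos.1 (hpos x hx).2)).le)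
  have hsP : 0 < s * (p₂ s - p₁ s) := (mul_pos hr₀ (sub_pos.2 hp₀)).trans_le hPs
  exact lt_min (pos_of_mul_pos_right hsP (hr₀.trans hs.1).le) (by linarith)

/-- Comparison lemma for the reduced slow flow `u' = p`, `p' = −p/r + f(u)`
with `f' > 0`: two solutions ordered at `r₀` (in both components) remain
strictly ordered on all of `[r₀, R]` (core of Lemma 3.6 of the paper). -/
theorem slow_flow_comparison
    (r₀ R : ℝ) (hr₀ : 0 < r₀) (hR : r₀ < R)
    (f : ℝ → ℝ) (hf : Differentiable ℝ f) (hf' : ∀ x : ℝ, 0 < deriv f x)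
    (u₁ p₁ u₂ p₂ : ℝ → ℝ)
    (hu₁ : ∀ r ∈ Set.Icc r₀ R, HasDerivAt u₁ (p₁ r) r)
    (hp₁ : ∀ r ∈ Set.Icc r₀ R, HasDerivAt p₁ (-(p₁ r)/r + f (u₁ r)) r)
    (hu₂ : ∀ r ∈ Set.Icc r₀ R, HasDerivAt u₂ (p₂ r) r)
    (hp₂ : ∀ r ∈ Set.Icc r₀ R, HasDerivAt p₂ (-(p₂ r)/r + f (u₂ r)) r)
    (hu₀ : u₁ r₀ < u₂ r₀) (hp₀ : p₁ r₀ < p₂ r₀) :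
    ∀ r ∈ Set.Icc r₀ R, p₁ r < p₂ r ∧ u₁ r < u₂ r :=
  slow_flow_comparison_general r₀ R hr₀ f hf' u₁ p₁ u₂ p₂ hu₁ hp₁ hu₂ hp₂ hu₀ hp₀
end
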